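/- arXiv:1405.3576 — 2 statements merged into one kernel-verified Lean document; each statement's English description precedes it below -/
import Mathlib

section
/- No DFA over the alphabet Δ with at most two states has I as its set of reset words; consequently, since ℬ has three states and Syn(ℬ) = I, the reset complexity of I is exactly 3 and ℬ is a minimal synchronizing automaton for I. -/
/-- The transition function of a DFA extended to words (read left to right). -/
def deltaStar {Q A : Type} (δ : Q → A → Q) (q : Q) (w : List A) : Q :=
  w.foldl δ q

/-- `w` is a reset word for the DFA with transition function `δ`. -/
def IsReset {Q A : Type} (δ : Q → A → Q) (w : List A) : Prop :=
  ∀ q q' : Q, deltaStar δ q w = deltaStar δ q' w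

/-- The set of reset words of a DFA. -/
def Syn {Q A : Type} (δ : Q → A → Q) : Set (List A) :=
  {w | IsReset δ w}

/-- The alphabet Δ = Σ ∪ {x,y,z}: `Sum.inl a` is a letter of Σ, and
`Sum.inr 0`, `Sum.inr 1`, `Sum.inr 2` are the new letters x, y, z. -/
abbrev Alph (σ : Type) : Type := σ ⊕ Fin 3

def xL {σ : Type} : Alph σ := Sum.inr 0
def yL {σ : Type} : Alph σ := Sum.inr 1
def zL {σ : Type} : Alph σ := Sum.inr 2

/-- `w ∈ (Σ ∪ {x})*`, i.e. `w` contains no occurrence of the letters y and z. -/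
def noYZ {σ : Type} (w : List (Alph σ)) : Prop := yL ∉ w ∧ zL ∉ w

/-- L₁ = (Σ∪{x})* y Δ* -/
def L1 {σ : Type} : Set (List (Alph σ)) :=
  {w | ∃ u v, noYZ u ∧ w = u ++ yL :: v}

/-- L₂ = (Σ∪{x})* z Δ⁺ -/
def L2 {σ : Type} : Set (List (Alph σ)) :=
  {w | ∃ u v, noYZ u ∧ v ≠ [] ∧ w = u ++ zL :: v}

/-- The ideal language I = L₁ ∪ L₂. -/
def ISet {σ : Type} : Set (List (Alph σ)) := L1 ∪ L2

/-- The 3-state DFA ℬ: states `0 = p₁`, `1 = p₂`, `2 = s` (the sink). -/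
def tauB {σ : Type} (p : Fin 3) (a : Alph σ) : Fin 3 :=
  if p = 0 then
    match a with
    | Sum.inl _ => 0                                -- τ(p₁,a) = p₁ for a ∈ Σ
    | Sum.inr k => if k = 0 then 0                  -- τ(p₁,x) = p₁
                   else if k = 1 then 2             -- τ(p₁,y) = s
                   else 1                            -- τ(p₁,z) = p₂
  else 2                                             -- τ(p₂,·) = τ(s,·) = s

/-- The reset complexity of a language `L` over the alphabet `A`: the minimal
number of states of a DFA over `A` whose set of reset words equals `L`. -/
noncomputable def rc {A : Type} (L : Set (List A)) : ℕ :=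
  sInf {m | ∃ (Q : Type) (instQ : Fintype Q), Nonempty Q ∧
    ∃ δ : Q → A → Q, @Fintype.card Q instQ = m ∧ Syn δ = L}


/-!
In a DFA with at most two states, a letter that is not a reset word acts injectively, hence as a
permutation, so prefixing it to a word cannot turn a non-reset word into a reset word. Since
`zz ∈ I` but `z ∉ I`, no such DFA has `I` as its set of reset words, while the three-state
automaton ℬ does: `s` is a sink, `p₂` falls into it on any letter, and `p₁` reaches it exactly
on the words of `I`.
-/

section DFA

variable {Q A : Type}

@[simp]
lemma deltaStar_nil (δ : Q → A → Q) (q : Q) : deltaStar δ q [] = q := rfl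

@[simp]
lemma deltaStar_cons (δ : Q → A → Q) (q : Q) (a : A) (w : List A) :
    deltaStar δ q (a :: w) = deltaStar δ (δ q a) w := rfl

lemma constant_or_injective_of_card_le_two {β : Type} [Fintype Q] (hQ : Fintype.card Q ≤ 2)
    (f : Q → β) : (∀ q q', f q = f q') ∨ Function.Injective f := by
  classical
  refine or_iff_not_imp_right.2 fun hf q q' => ?_
  obtain ⟨a, b, hab, hne⟩ : ∃ a b, f a = f b ∧ a ≠ b := by
    simpa [Function.Injective] using hf
  have huniv : ({a, b} : Finset Q) = Finset.univ :=
    Finset.eq_univ_of_card _ (le_antisymm (Finset.card_le_univ _)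
      (hQ.trans (Finset.card_pair hne).ge))
  have hmem : ∀ c, c = a ∨ c = b := fun c => by
    simpa [← huniv] using Finset.mem_univ c
  rcases hmem q with rfl | rfl <;> rcases hmem q' with rfl | rfl <;> simp [hab]

lemma IsReset.of_cons_of_surjective {δ : Q → A → Q} {a : A} {w : List A}
    (hsurj : Function.Surjective (δ · a)) (h : IsReset δ (a :: w)) : IsReset δ w := by
  intro q q'
  obtain ⟨p, rfl⟩ := hsurj q
  obtain ⟨p', rfl⟩ := hsurj q'
  exact h p p'

lemma isReset_singleton_of_isReset_pair [Fintype Q] (hQ : Fintype.card Q ≤ 2)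
    {δ : Q → A → Q} {a : A} (h : IsReset δ [a, a]) : IsReset δ [a] := by
  rcases constant_or_injective_of_card_le_two hQ (δ · a) with hconst | hinj
  · exact hconst
  · exact h.of_cons_of_surjective (Finite.surjective_of_injective hinj)

lemma rc_eq_of_minimal {L : Set (List A)} {n : ℕ} {P : Type} [Fintype P] [Nonempty P]
    {τ : P → A → P} (hcard : Fintype.card P = n) (hτ : Syn τ = L)
    (hmin : ∀ (Q : Type) (_ : Fintype Q) (δ : Q → A → Q), Fintype.card Q < n → Syn δ ≠ L) :
    rc L = n :=
  IsLeast.csInf_eq ⟨⟨P, inferInstance, inferInstance, τ, hcard, hτ⟩,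
    fun _ ⟨Q, _, _, δ, hQ, hδ⟩ => not_lt.1 fun hlt => hmin Q _ δ (hQ ▸ hlt) hδ⟩

end DFA

section IdealLanguage

variable {σ : Type}

lemma nil_notMem_ISet : ([] : List (Alph σ)) ∉ ISet := by
  rintro (⟨u, v, -, h⟩ | ⟨u, v, -, -, h⟩) <;> simp at h

lemma noYZ_cons_iff (a : Alph σ) (u : List (Alph σ)) :
    noYZ (a :: u) ↔ a ≠ yL ∧ a ≠ zL ∧ noYZ u := by
  simp only [noYZ, List.mem_cons, not_or]
  tauto

lemma cons_mem_ISet_iff (a : Alph σ) (w : List (Alph σ)) :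
    a :: w ∈ ISet ↔ a = yL ∨ (a = zL ∧ w ≠ []) ∨ (a ≠ yL ∧ a ≠ zL ∧ w ∈ ISet) := by
  constructor
  · rintro (⟨_ | ⟨b, u⟩, v, hu, h⟩ | ⟨_ | ⟨b, u⟩, v, hu, hv, h⟩)
    · simp_all
    · obtain ⟨rfl, rfl⟩ := List.cons_eq_cons.1 h
      obtain ⟨hy, hz, hu⟩ := (noYZ_cons_iff _ _).1 hu
      exact Or.inr (Or.inr ⟨hy, hz, Or.inl ⟨u, v, hu, rfl⟩⟩)
    · simp_all
    · obtain ⟨rfl, rfl⟩ := List.cons_eq_cons.1 h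
      obtain ⟨hy, hz, hu⟩ := (noYZ_cons_iff _ _).1 hu
      exact Or.inr (Or.inr ⟨hy, hz, Or.inr ⟨u, v, hu, hv, rfl⟩⟩)
  · have hnil : noYZ ([] : List (Alph σ)) := ⟨List.not_mem_nil, List.not_mem_nil⟩
    rintro (rfl | ⟨rfl, hw⟩ | ⟨hy, hz, ⟨u, v, hu, rfl⟩ | ⟨u, v, hu, hv, rfl⟩⟩)
    · exact Or.inl ⟨[], w, hnil, rfl⟩
    · exact Or.inr ⟨[], w, hnil, hw, rfl⟩
    · exact Or.inl ⟨a :: u, v, (noYZ_cons_iff _ _).2 ⟨hy, hz, hu⟩, rfl⟩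
    · exact Or.inr ⟨a :: u, v, (noYZ_cons_iff _ _).2 ⟨hy, hz, hu⟩, hv, rfl⟩

lemma pair_zL_mem_ISet : [zL, zL] ∈ ISet (σ := σ) :=
  (cons_mem_ISet_iff _ _).2 (Or.inr (Or.inl ⟨rfl, List.cons_ne_nil _ _⟩))

lemma singleton_zL_notMem_ISet : [zL] ∉ ISet (σ := σ) := by
  simp [cons_mem_ISet_iff, yL, zL]

@[simp]
lemma deltaStar_tauB_two (w : List (Alph σ)) : deltaStar tauB 2 w = 2 := by
  induction w with
  | nil => rfl
  | cons a w ih => simpa [tauB] using ih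

lemma deltaStar_tauB_one_eq_two_iff (w : List (Alph σ)) : deltaStar tauB 1 w = 2 ↔ w ≠ [] := by
  cases w with
  | nil => simp
  | cons a w => simp [tauB]

lemma deltaStar_tauB_zero_eq_two_iff (w : List (Alph σ)) : deltaStar tauB 0 w = 2 ↔ w ∈ ISet := by
  induction w with
  | nil => simp [nil_notMem_ISet]
  | cons a w ih =>
    rw [cons_mem_ISet_iff, deltaStar_cons]
    rcases a with s | k
    · simpa [tauB, yL, zL] using ih
    · fin_cases k
      · simpa [tauB, yL, zL] using ih
      · simp [tauB, yL]
      · simp [tauB, yL, zL, deltaStar_tauB_one_eq_two_iff]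

lemma syn_tauB : Syn (tauB (σ := σ)) = ISet := by
  ext w
  rw [← deltaStar_tauB_zero_eq_two_iff]
  refine ⟨fun hw => (hw 0 2).trans (deltaStar_tauB_two w), fun h0 => ?_⟩
  have hw : w ≠ [] := by rintro rfl; simp at h0
  have hall : ∀ q : Fin 3, deltaStar tauB q w = 2 := by
    intro q
    fin_cases q
    · exact h0
    · exact (deltaStar_tauB_one_eq_two_iff w).2 hw
    · exact deltaStar_tauB_two w
  exact fun q q' => (hall q).trans (hall q').symm

lemma syn_ne_ISet_of_card_le_two {Q : Type} [Fintype Q] (hQ : Fintype.card Q ≤ 2)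
    (δ : Q → Alph σ → Q) : Syn δ ≠ ISet := by
  intro hδ
  have hzz : [zL, zL] ∈ Syn δ := hδ ▸ pair_zL_mem_ISet
  have hz : [zL] ∈ Syn δ := isReset_singleton_of_isReset_pair hQ hzz
  exact singleton_zL_notMem_ISet (hδ ▸ hz)

end IdealLanguage

theorem rc_I_eq_three_general (σ : Type) :
    (∀ (Q : Type) (instQ : Fintype Q), Nonempty Q → ∀ δ : Q → Alph σ → Q,
        @Fintype.card Q instQ ≤ 2 → Syn δ ≠ ISet) ∧
    rc (ISet (σ := σ)) = 3 ∧
    Syn (tauB (σ := σ)) = ISet ∧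
    Fintype.card (Fin 3) = rc (ISet (σ := σ)) := by
  have hrc : rc (ISet (σ := σ)) = 3 :=
    rc_eq_of_minimal (P := Fin 3) (Fintype.card_fin 3) syn_tauB
      fun _ _ δ hQ => syn_ne_ISet_of_card_le_two (Nat.le_of_lt_succ hQ) δ
  exact ⟨fun _ _ _ δ hQ => syn_ne_ISet_of_card_le_two hQ δ, hrc, syn_tauB,
    by rw [hrc, Fintype.card_fin]⟩

/-- No DFA over Δ with at most two states has I as its set of reset words;
consequently rc(I) = 3 and ℬ (a three-state DFA with Syn(ℬ) = I) is a minimal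
synchronizing automaton for I. -/
theorem rc_I_eq_three (σ : Type) [Fintype σ] :
    (∀ (Q : Type) (instQ : Fintype Q), Nonempty Q → ∀ δ : Q → Alph σ → Q,
        @Fintype.card Q instQ ≤ 2 → Syn δ ≠ ISet) ∧
    rc (ISet (σ := σ)) = 3 ∧
    Syn (tauB (σ := σ)) = ISet ∧
    Fintype.card (Fin 3) = rc (ISet (σ := σ)) :=
  rc_I_eq_three_general σ
end

section
/- Let 𝒜 = ⟨Q,Σ,δ⟩ be a synchronizing DFA with L = Syn(𝒜), let Γ = { a ∈ Σ : the one-letter word a belongs to L }, and let 𝒜' = ⟨Q, Σ∖Γ, δ⟩ be the DFA obtained from 𝒜 by removing all transitions labeled by letters of Γ. Then rc(L) = 2 if and only if L ≠ Σ* and 𝒜' is not synchronizing (equivalently, L ≠ Σ* and no word over Σ∖Γ is a reset word for 𝒜). -/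
lemma deltaStar_append {Q A : Type} (δ : Q → A → Q) (q : Q) (u v : List A) :
    deltaStar δ q (u ++ v) = deltaStar δ (deltaStar δ q u) v := by
  simp [deltaStar, List.foldl_append]

lemma isReset_sandwich {Q A : Type} (δ : Q → A → Q) {w : List A}
    (hw : IsReset δ w) (u v : List A) : IsReset δ (u ++ w ++ v) := by
  intro q q'
  rw [deltaStar_append, deltaStar_append, deltaStar_append, deltaStar_append,
    hw (deltaStar δ q u) (deltaStar δ q' u)]

lemma deltaStar_map {Q A B : Type} (δ : Q → A → Q) (f : B → A) (q : Q) (w : List B) :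
    deltaStar δ q (w.map f) = deltaStar (fun q b => δ q (f b)) q w := by
  simp [deltaStar, List.foldl_map]

lemma card_two_cases {Q : Type} [Fintype Q] (h : Fintype.card Q = 2)
    {a b : Q} (hab : a ≠ b) (q : Q) : q = a ∨ q = b := by
  classical
  have : ({a, b} : Finset Q) = Finset.univ := by
    apply Finset.eq_univ_of_card
    rw [Finset.card_insert_of_notMem (by simpa using hab), Finset.card_singleton, h]
  have hq : q ∈ ({a, b} : Finset Q) := this ▸ Finset.mem_univ q
  simpa using hq

lemma letter_injective {Q A : Type} [Fintype Q] (h2 : Fintype.card Q = 2)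
    (δ : Q → A → Q) (a : A) (ha : ¬ IsReset δ [a]) :
    Function.Injective (fun q => δ q a) := by
  intro x y hxy
  by_contra hne
  apply ha
  intro q q'
  have hq := card_two_cases h2 hne q
  have hq' := card_two_cases h2 hne q'
  simp only [deltaStar, List.foldl_cons, List.foldl_nil] at hxy ⊢
  rcases hq with rfl | rfl <;> rcases hq' with rfl | rfl <;> simp [hxy]

lemma deltaStar_injective {Q A : Type} [Fintype Q] (h2 : Fintype.card Q = 2)
    (δ : Q → A → Q) (w : List A) (hw : ∀ a ∈ w, ¬ IsReset δ [a]) :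
    Function.Injective (fun q => deltaStar δ q w) := by
  induction w with
  | nil => intro x y h; simpa [deltaStar] using h
  | cons a w ih =>
      have h1 : Function.Injective (fun q => δ q a) :=
        letter_injective h2 δ a (hw a (by simp))
      have h2' : Function.Injective (fun q => deltaStar δ q w) :=
        ih (fun b hb => hw b (by simp [hb]))
      intro x y h
      simp only [deltaStar, List.foldl_cons] at h
      exact h1 (h2' h)

lemma syn_univ_of_subsingleton {Q A : Type} [Subsingleton Q] (δ : Q → A → Q) :
    Syn δ = Set.univ := by
  ext w
  simp only [Set.mem_univ, iff_true, Syn, Set.mem_setOf_eq, IsReset]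
  intro q q'
  exact congrArg (fun x => deltaStar δ x w) (Subsingleton.elim q q')

open Classical in
lemma boolDFA_deltaStar {A : Type} (P : A → Prop) (q : Bool) (w : List A) :
    deltaStar (fun (q : Bool) a => if P a then true else q) q w
      = if ∃ a ∈ w, P a then true else q := by
  induction w generalizing q with
  | nil => simp [deltaStar]
  | cons a w ih =>
      simp only [deltaStar, List.foldl_cons] at *
      rw [ih]
      by_cases hpa : P a
      · simp [hpa]
      · by_cases hw : ∃ b ∈ w, P b <;> simp [hpa, hw]

/-- For a synchronizing DFA 𝒜 with L = Syn(𝒜), Γ the set of letters that are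
reset words, and 𝒜' the DFA obtained by removing all transitions labeled by
letters of Γ: rc(L) = 2 iff L ≠ Σ* and 𝒜' is not synchronizing. -/
theorem rc_eq_two_iff
    (Q A : Type) [Fintype Q] [Nonempty Q] [Fintype A] (δ : Q → A → Q)
    (hsyn : ∃ w : List A, IsReset δ w) :
    rc (Syn δ) = 2 ↔
      (Syn δ ≠ Set.univ ∧
        ¬ ∃ w : List {a : A // [a] ∉ Syn δ},
            IsReset (fun (q : Q) (a : {a : A // [a] ∉ Syn δ}) => δ q a.1) w) := by
  classical
  set S : Set ℕ := {m | ∃ (Q' : Type) (instQ : Fintype Q'), Nonempty Q' ∧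
    ∃ δ' : Q' → A → Q', @Fintype.card Q' instQ = m ∧ Syn δ' = Syn δ} with hSdef
  have hrc : rc (Syn δ) = sInf S := rfl
  have hmem : Fintype.card Q ∈ S := ⟨Q, inferInstance, inferInstance, δ, rfl, rfl⟩
  have hSne : S.Nonempty := ⟨_, hmem⟩
  constructor
  · intro h2
    have h2mem : 2 ∈ S := by
      have := Nat.sInf_mem hSne
      rwa [← hrc, h2] at this
    obtain ⟨Q', instQ', hQ'ne, δ', hcard, hsynEq⟩ := h2mem
    letI := instQ'
    constructor
    · intro huniv
      have h1mem : (1 : ℕ) ∈ S :=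
        ⟨Unit, inferInstance, ⟨()⟩, fun q _ => q, by simp,
          by rw [syn_univ_of_subsingleton, huniv]⟩
      have := Nat.sInf_le h1mem
      omega
    · rintro ⟨w, hw⟩
      set w' := w.map Subtype.val with hw'def
      have hwreset : IsReset δ w' := by
        intro q q'
        rw [hw'def, deltaStar_map, deltaStar_map]
        exact hw q q'
      have hw'mem : w' ∈ Syn δ' := by rw [hsynEq]; exact hwreset
      have hlet : ∀ a ∈ w', ¬ IsReset δ' [a] := by
        intro a ha hres
        obtain ⟨b, hb, rfl⟩ := List.mem_map.mp ha
        have hb2 : [b.1] ∈ Syn δ' := hres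
        rw [hsynEq] at hb2
        exact b.2 hb2
      have hinj := deltaStar_injective hcard δ' w' hlet
      obtain ⟨x, y, hxy⟩ := Fintype.exists_pair_of_one_lt_card (α := Q')
        (by rw [hcard]; norm_num)
      exact hxy (hinj (hw'mem x y))
  · rintro ⟨hneq, hnores⟩
    have hΓchar : Syn δ = {w | ∃ a ∈ w, [a] ∈ Syn δ} := by
      ext w
      constructor
      · intro hwL
        by_contra hno
        simp only [Set.mem_setOf_eq, not_exists, not_and] at hno
        apply hnores
        refine ⟨w.pmap (fun a h => (⟨a, h⟩ : {a : A // [a] ∉ Syn δ})) hno, ?_⟩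
        have hmap : (w.pmap (fun a h => (⟨a, h⟩ : {a : A // [a] ∉ Syn δ})) hno).map
            Subtype.val = w := by
          simp [List.map_pmap]
        have key : ∀ q : Q, deltaStar (fun (q : Q) (a : {a : A // [a] ∉ Syn δ}) => δ q a.1)
            q (w.pmap (fun a h => (⟨a, h⟩ : {a : A // [a] ∉ Syn δ})) hno)
              = deltaStar δ q w := by
          intro q
          have h := deltaStar_map δ (Subtype.val (p := fun a : A => [a] ∉ Syn δ)) q
            (w.pmap (fun a h => (⟨a, h⟩ : {a : A // [a] ∉ Syn δ})) hno)
          rw [hmap] at h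
          exact h.symm
        intro q q'
        rw [key, key]
        exact hwL q q'
      · rintro ⟨a, haw, haL⟩
        obtain ⟨u, v, rfl⟩ := List.append_of_mem haw
        have h1 := isReset_sandwich δ haL u v
        have h2 : u ++ [a] ++ v = u ++ a :: v := by simp
        rwa [h2] at h1
    have hsynB : Syn (fun (q : Bool) (a : A) => if [a] ∈ Syn δ then true else q) = Syn δ := by
      rw [hΓchar]
      ext w
      constructor
      · intro hres
        by_contra hno
        have h0 := hres true false
        rw [boolDFA_deltaStar, boolDFA_deltaStar] at h0
        simp only [Set.mem_setOf_eq] at hno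
        simp [hno] at h0
      · rintro h q q'
        show deltaStar _ q w = deltaStar _ q' w
        rw [boolDFA_deltaStar, boolDFA_deltaStar]
        simp only [Set.mem_setOf_eq] at h
        simp [h]
    have h2mem : 2 ∈ S :=
      ⟨Bool, inferInstance, ⟨true⟩, _, by simp, hsynB⟩
    rw [hrc]
    apply le_antisymm
    · exact Nat.sInf_le h2mem
    · apply le_csInf ⟨2, h2mem⟩
      rintro m ⟨Q', instQ', hQ'ne, δ', hcard, hsynEq⟩
      by_contra hlt
      push_neg at hlt
      letI := instQ'
      haveI := hQ'ne
      have hpos : 0 < m := hcard ▸ Fintype.card_pos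
      haveI : Subsingleton Q' := by
        rw [← Fintype.card_le_one_iff_subsingleton]
        omega
      exact hneq (by rw [← hsynEq, syn_univ_of_subsingleton])
end
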